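/- Fix an even smooth ψ̃ : ℝ → [0,1] supported in [−3/2,3/2] and equal to 1 on [−5/4,5/4]; for k ∈ ℤ set ψ_k(x) := ψ̃(|x|/2^k) − ψ̃(|x|/2^{k−1}) (applied to vectors of any dimension via their norm), and let φ_j := ψ_j for integers j > 0 with φ₀(x) := ψ̃(|x|). For k ∈ ℤ₊ and k̃ ∈ [0, k+2] ∩ ℤ define K_{k,k̃}(y) := ∫_{ℝ³} e^{i y·ξ} φ_{k̃}(ξ') ψ_k(ξ) (iξ₃/|ξ|²) dξ, where ξ' := (ξ₁,ξ₂). Then for every N ∈ ℕ there exists a constant C_N (independent of k, k̃) such that |K_{k,k̃}(y)| ≤ C_N 2^{2k̃} (1 + 2^{k̃}|y'|)^{−N} (1 + 2^{k}|y₃|)^{−N} for all y ∈ ℝ³, where y' := (y₁,y₂). -/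

import Mathlib

open MeasureTheory Real Set SchwartzMap FourierTransform
open scoped RealInnerProductSpace

noncomputable section

/-- `ℝ³` with the Euclidean norm. -/
abbrev E3 : Type := EuclideanSpace ℝ (Fin 3)

/-- The norm `|u'|` of the horizontal projection `u' = (u₁,u₂)`. -/
def hnorm (u : E3) : ℝ := Real.sqrt (u 0 ^ 2 + u 1 ^ 2)

/-- The horizontal projection `u' = (u₁,u₂) ∈ ℝ²`. -/
def hproj (u : E3) : EuclideanSpace ℝ (Fin 2) :=
  (EuclideanSpace.equiv (Fin 2) ℝ).symm ![u 0, u 1]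

/-- `ψ̃` is an admissible cutoff: even, smooth, `[0,1]`-valued, supported in `[-3/2,3/2]`,
and equal to `1` on `[-5/4,5/4]`. -/
structure CutoffFn (ψ : ℝ → ℝ) : Prop where
  smooth : ContDiff ℝ (⊤ : ℕ∞) ψ
  even : ∀ r, ψ (-r) = ψ r
  mem_Icc : ∀ r, ψ r ∈ Icc (0 : ℝ) 1
  supp : Function.support ψ ⊆ Icc (-(3/2) : ℝ) (3/2)
  eq_one : ∀ r : ℝ, |r| ≤ 5/4 → ψ r = 1

/-- The dyadic annulus cutoff `ψ_k(ξ) = ψ̃(|ξ|/2^k) − ψ̃(|ξ|/2^{k-1})`. -/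
def psiDyadic (ψ : ℝ → ℝ) (k : ℤ) {E : Type*} [NormedAddCommGroup E] (ξ : E) : ℝ :=
  ψ (‖ξ‖ / 2 ^ k) - ψ (‖ξ‖ / 2 ^ (k - 1))

/-- The cutoff `φ_j`: `φ₀(ξ) = ψ̃(|ξ|)` and `φ_j = ψ_j` for `j > 0`. -/
def phiDyadic (ψ : ℝ → ℝ) (j : ℕ) {E : Type*} [NormedAddCommGroup E] (ξ : E) : ℝ :=
  if j = 0 then ψ ‖ξ‖ else psiDyadic ψ (j : ℤ) ξ


abbrev E2 : Type := EuclideanSpace ℝ (Fin 2)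

variable {ψ : ℝ → ℝ}



lemma iter_bound {E F : Type*} [NormedAddCommGroup E] [NormedSpace ℝ E]
    [NormedAddCommGroup F] [NormedSpace ℝ F]
    {f : E → F} (hc : ContDiff ℝ (⊤ : ℕ∞) f) (hs : HasCompactSupport f) (n : ℕ) :
    ∃ C, 0 ≤ C ∧ ∀ x, ‖iteratedFDeriv ℝ n f x‖ ≤ C := by
  obtain ⟨C, hC⟩ := (hs.iteratedFDeriv n).exists_bound_of_continuous
    (hc.continuous_iteratedFDeriv (by exact_mod_cast le_top))
  exact ⟨max C 0, le_max_right _ _, fun x => (hC x).trans (le_max_left _ _)⟩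

lemma iter_comp_clm_bound {E G F : Type*} [NormedAddCommGroup E] [NormedSpace ℝ E]
    [NormedAddCommGroup G] [NormedSpace ℝ G] [NormedAddCommGroup F] [NormedSpace ℝ F]
    {f : E → F} (hf : ContDiff ℝ (⊤ : ℕ∞) f) (L : G →L[ℝ] E)
    {M : ℝ} (hM : ‖L‖ ≤ M) (n : ℕ) (x : G) :
    ‖iteratedFDeriv ℝ n (f ∘ L) x‖ ≤ ‖iteratedFDeriv ℝ n f (L x)‖ * M ^ n := by
  rw [L.iteratedFDeriv_comp_right hf x (by exact_mod_cast le_top)]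
  refine (ContinuousMultilinearMap.norm_compContinuousLinearMap_le _ _).trans ?_
  have h1 : (∏ _i : Fin n, ‖L‖) ≤ M ^ n := by
    rw [Finset.prod_const, Finset.card_univ, Fintype.card_fin]
    exact pow_le_pow_left₀ (norm_nonneg _) hM n
  exact mul_le_mul_of_nonneg_left h1 (norm_nonneg _) |>.trans_eq rfl

/-- Uniform Fourier decay for Schwartz functions, controlled by finitely many seminorms. -/
lemma fourier_decay (N : ℕ) :
    ∃ C : ℝ, 0 ≤ C ∧ ∃ s : Finset (ℕ × ℕ), ∀ f : SchwartzMap E3 ℂ, ∀ w : E3,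
      (1 + ‖w‖) ^ N * ‖𝓕 (⇑f) w‖ ≤
        C * (s.sup (schwartzSeminormFamily ℝ E3 ℂ)) f := by
  set p := schwartzSeminormFamily ℝ E3 ℂ with hp
  set T := SchwartzMap.fourierTransformCLM ℝ (V := E3) (E := ℂ) with hT
  have key : ∀ i : ℕ × ℕ, ∃ s : Finset (ℕ × ℕ), ∃ C : NNReal,
      ∀ f : SchwartzMap E3 ℂ, p i (T f) ≤ C * (s.sup p) f := by
    intro i
    have hcont : Continuous ((p i).comp T.toLinearMap) :=
      ((schwartz_withSeminorms ℝ E3 ℂ).continuous_seminorm i).comp T.continuous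
    obtain ⟨s, C, _, hle⟩ := Seminorm.bound_of_continuous (schwartz_withSeminorms ℝ E3 ℂ)
      ((p i).comp T.toLinearMap) hcont
    exact ⟨s, C, fun f => hle f⟩
  choose sfun Cfun hfun using key
  set I : Finset (ℕ × ℕ) := Finset.Iic (N, 0) with hI
  refine ⟨2 ^ N * (∑ i ∈ I, (Cfun i : ℝ)), by positivity, I.biUnion sfun, fun f w => ?_⟩
  have h1 : (1 + ‖w‖) ^ N * ‖iteratedFDeriv ℝ 0 (⇑(T f)) w‖ ≤
      2 ^ N * I.sup p (T f) :=
    SchwartzMap.one_add_le_sup_seminorm_apply (m := (N, 0)) le_rfl le_rfl (T f) w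
  rw [norm_iteratedFDeriv_zero] at h1
  have h2 : I.sup p (T f) ≤ (∑ i ∈ I, (Cfun i : ℝ)) * ((I.biUnion sfun).sup p) f := by
    refine Seminorm.finset_sup_apply_le (by positivity) (fun i hi => ?_)
    refine (hfun i f).trans ?_
    refine mul_le_mul (Finset.single_le_sum (f := fun i => (Cfun i : ℝ))
      (fun j _ => (Cfun j).2) hi) ?_ (apply_nonneg _ _) (by positivity)
    exact Seminorm.le_def.1 (Finset.sup_mono (Finset.subset_biUnion_of_mem sfun hi)) f
  have hTf : ⇑(T f) = 𝓕 (⇑f) := by rw [hT]; rfl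
  calc (1 + ‖w‖) ^ N * ‖𝓕 (⇑f) w‖ = (1 + ‖w‖) ^ N * ‖(T f) w‖ := by rw [hTf]
    _ ≤ 2 ^ N * I.sup p (T f) := h1
    _ ≤ 2 ^ N * ((∑ i ∈ I, (Cfun i : ℝ)) * ((I.biUnion sfun).sup p) f) := by
        refine mul_le_mul_of_nonneg_left h2 (by positivity)
    _ = 2 ^ N * (∑ i ∈ I, (Cfun i : ℝ)) * ((I.biUnion sfun).sup p) f := by ring



/-- The diagonal linear map on `E3` with entries `c`. -/
def dlin (c : Fin 3 → ℝ) : E3 →ₗ[ℝ] E3 where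
  toFun η := (WithLp.equiv 2 (Fin 3 → ℝ)).symm (fun i => c i * η i)
  map_add' x y := by
    ext i
    simp [WithLp.ofLp_toLp, mul_add]
  map_smul' r x := by
    ext i
    simp [WithLp.ofLp_toLp]
    ring

@[simp] lemma dlin_apply (c : Fin 3 → ℝ) (η : E3) (i : Fin 3) :
    dlin c η i = c i * η i := rfl

def dclm (c : Fin 3 → ℝ) : E3 →L[ℝ] E3 := (dlin c).toContinuousLinearMap

@[simp] lemma dclm_apply (c : Fin 3 → ℝ) (η : E3) (i : Fin 3) :
    dclm c η i = c i * η i := rfl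

lemma norm_eq_sq (x : E3) : ‖x‖ = Real.sqrt (∑ i, (x i) ^ 2) := by
  rw [EuclideanSpace.norm_eq]
  congr 1
  refine Finset.sum_congr rfl fun i _ => ?_
  rw [Real.norm_eq_abs, sq_abs]

lemma dclm_norm_le (c : Fin 3 → ℝ) {M : ℝ} (hM : 0 ≤ M) (h : ∀ i, |c i| ≤ M) :
    ‖dclm c‖ ≤ M := by
  refine ContinuousLinearMap.opNorm_le_bound _ hM (fun η => ?_)
  rw [norm_eq_sq, norm_eq_sq]
  have h1 : ∑ i, (dclm c η i) ^ 2 ≤ ∑ i, M ^ 2 * (η i) ^ 2 := by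
    refine Finset.sum_le_sum fun i _ => ?_
    rw [dclm_apply, mul_pow]
    refine mul_le_mul_of_nonneg_right ?_ (sq_nonneg _)
    rw [← sq_abs (c i)]
    exact pow_le_pow_left₀ (abs_nonneg _) (h i) 2
  refine (Real.sqrt_le_sqrt h1).trans ?_
  rw [← Finset.mul_sum, Real.sqrt_mul (sq_nonneg M), Real.sqrt_sq hM]

lemma dlin_det (c : Fin 3 → ℝ) : LinearMap.det (dlin c) = c 0 * c 1 * c 2 := by
  set e := WithLp.linearEquiv 2 ℝ (Fin 3 → ℝ) with he
  have hconj : LinearMap.det ((e.toLinearMap ∘ₗ dlin c) ∘ₗ e.symm.toLinearMap)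
      = LinearMap.det (dlin c) := by
    rw [LinearMap.comp_assoc]
    exact LinearMap.det_conj (dlin c) e
  rw [← hconj, ← LinearMap.det_toMatrix' ]
  have : LinearMap.toMatrix' ((e.toLinearMap ∘ₗ dlin c) ∘ₗ e.symm.toLinearMap)
      = Matrix.diagonal c := by
    ext i j
    rw [LinearMap.toMatrix'_apply]
    simp only [LinearMap.comp_apply, LinearEquiv.coe_coe]
    have : (dlin c (e.symm fun j' => if j' = j then (1:ℝ) else 0)) i
        = c i * (if i = j then (1:ℝ) else 0) := by
      rw [dlin_apply]
      congr 1
    rw [show (Pi.single j (1:ℝ) : Fin 3 → ℝ) = fun j' => if j' = j then (1:ℝ) else 0 from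
      funext fun j' => Pi.single_apply j 1 j']
    rw [show (e ((dlin c) (e.symm fun j' => if j' = j then (1:ℝ) else 0))) i
        = (dlin c (e.symm fun j' => if j' = j then (1:ℝ) else 0)) i from rfl, this,
      Matrix.diagonal_apply]
    by_cases hij : i = j <;> simp [hij]
  rw [this, Matrix.det_diagonal, Fin.prod_univ_three]

/-- Change of variables by a positive diagonal map. -/
lemma integral_dclm (c : Fin 3 → ℝ) (hc : ∀ i, 0 < c i) (F : E3 → ℂ) :
    ∫ ξ : E3, F ξ = (c 0 * c 1 * c 2) * ∫ η : E3, F (dclm c η) := by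
  set d : ℝ := c 0 * c 1 * c 2 with hd
  have hd0 : 0 < d := mul_pos (mul_pos (hc 0) (hc 1)) (hc 2)
  have hdet : LinearMap.det (dlin c) = d := dlin_det c
  have hdet0 : LinearMap.det (dlin c) ≠ 0 := by rw [hdet]; exact hd0.ne'
  have hmap : Measure.map (dlin c) volume = ENNReal.ofReal d⁻¹ • volume := by
    rw [Measure.map_linearMap_addHaar_eq_smul_addHaar volume hdet0, hdet,
      abs_of_pos (inv_pos.2 hd0)]
  -- the homeomorphism
  have hinv : ∀ i, 0 < (c i)⁻¹ := fun i => inv_pos.2 (hc i)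
  set eH : E3 ≃ₜ E3 :=
    { toFun := dclm c
      invFun := dclm (fun i => (c i)⁻¹)
      left_inv := fun η => by
        ext i
        simp [inv_mul_cancel_left₀ (hc i).ne']
      right_inv := fun η => by
        ext i
        simp [mul_inv_cancel_left₀ (hc i).ne']
      continuous_toFun := (dclm c).continuous
      continuous_invFun := (dclm _).continuous } with heH
  have hcoe : Measure.map (⇑(dlin c)) volume = Measure.map (⇑eH.toMeasurableEquiv) volume := rfl
  have h2 : ∫ ξ : E3, F ξ ∂(Measure.map (⇑(dlin c)) volume) = ∫ η : E3, F (dclm c η) := by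
    rw [hcoe, MeasureTheory.integral_map_equiv]
    rfl
  have h3 : (volume : Measure E3) = ENNReal.ofReal d • Measure.map (⇑(dlin c)) volume := by
    rw [hmap, smul_smul, ← ENNReal.ofReal_mul hd0.le, mul_inv_cancel₀ hd0.ne',
      ENNReal.ofReal_one, one_smul]
  calc ∫ ξ : E3, F ξ = ∫ ξ : E3, F ξ ∂(ENNReal.ofReal d • Measure.map (⇑(dlin c)) volume) := by
        rw [← h3]
    _ = (ENNReal.ofReal d).toReal • ∫ ξ : E3, F ξ ∂(Measure.map (⇑(dlin c)) volume) := by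
        rw [MeasureTheory.integral_smul_measure]
    _ = d * ∫ η : E3, F (dclm c η) := by
        rw [h2, ENNReal.toReal_ofReal hd0.le, Complex.real_smul]
    _ = (c 0 * c 1 * c 2) * ∫ η : E3, F (dclm c η) := by
        rw [hd]; push_cast; ring



def psi1 (ψ : ℝ → ℝ) (t : ℝ) : ℝ := ψ t - ψ (2 * t)

variable {ψ : ℝ → ℝ}

lemma psi_zero_of_gt (hψ : CutoffFn ψ) {t : ℝ} (ht : 3/2 < |t|) : ψ t = 0 := by
  by_contra h
  exact absurd (abs_le.2 ⟨(hψ.supp h).1, (hψ.supp h).2⟩) (not_le.2 ht)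

lemma psi1_smooth (hψ : CutoffFn ψ) : ContDiff ℝ (⊤ : ℕ∞) (psi1 ψ) :=
  hψ.smooth.sub (hψ.smooth.comp (contDiff_const.mul contDiff_id))

lemma psi1_zero_small (hψ : CutoffFn ψ) {t : ℝ} (ht : |t| ≤ 5/8) : psi1 ψ t = 0 := by
  have h1 : ψ t = 1 := hψ.eq_one t (ht.trans (by norm_num))
  have h2 : ψ (2 * t) = 1 := hψ.eq_one _ (by rw [abs_mul, abs_two]; linarith)
  simp [psi1, h1, h2]

lemma psi1_zero_large (hψ : CutoffFn ψ) {t : ℝ} (ht : 3/2 < |t|) : psi1 ψ t = 0 := by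
  have h1 : ψ t = 0 := psi_zero_of_gt hψ ht
  have h2 : ψ (2 * t) = 0 := psi_zero_of_gt hψ (by rw [abs_mul, abs_two]; linarith)
  simp [psi1, h1, h2]

/-- Smoothness of `f ∘ norm` when `f` is locally constant near `0`. -/
lemma contDiff_comp_norm {E : Type*} [NormedAddCommGroup E] [InnerProductSpace ℝ E]
    {f : ℝ → ℝ} (hf : ContDiff ℝ (⊤ : ℕ∞) f) (hconst : ∀ t : ℝ, |t| < 5/8 → f t = f 0) :
    ContDiff ℝ (⊤ : ℕ∞) (fun x : E => f ‖x‖) := by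
  rw [contDiff_iff_contDiffAt]
  intro x
  by_cases hx : x = 0
  · subst hx
    have hev : (fun y : E => f ‖y‖) =ᶠ[nhds 0] (fun _ => f 0) := by
      filter_upwards [Metric.ball_mem_nhds (0 : E) (by norm_num : (0:ℝ) < 5/8)] with y hy
      refine hconst _ ?_
      rw [abs_of_nonneg (norm_nonneg _)]
      simpa [Metric.mem_ball, dist_zero_right] using hy
    exact (contDiffAt_const (c := f 0)).congr_of_eventuallyEq hev
  · exact hf.contDiffAt.comp x (contDiffAt_norm ℝ hx)

lemma contDiff_psi_norm (hψ : CutoffFn ψ) {E : Type*} [NormedAddCommGroup E]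
    [InnerProductSpace ℝ E] : ContDiff ℝ (⊤ : ℕ∞) (fun x : E => ψ ‖x‖) :=
  contDiff_comp_norm hψ.smooth (fun t ht => by
    rw [hψ.eq_one t (le_of_lt (ht.trans_le (by norm_num))),
      hψ.eq_one 0 (by norm_num)])

lemma contDiff_psi1_norm (hψ : CutoffFn ψ) {E : Type*} [NormedAddCommGroup E]
    [InnerProductSpace ℝ E] : ContDiff ℝ (⊤ : ℕ∞) (fun x : E => psi1 ψ ‖x‖) :=
  contDiff_comp_norm (psi1_smooth hψ) (fun t ht => by
    rw [psi1_zero_small hψ ht.le, psi1_zero_small hψ (by norm_num)])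

/-- The rescaled symbol `G(w) = ψ₁(‖w‖) · i w₃ / ‖w‖²`. -/
def Gfun (ψ : ℝ → ℝ) (w : E3) : ℂ :=
  ((psi1 ψ ‖w‖ : ℝ) : ℂ) * (Complex.I * ((w 2 : ℝ) : ℂ) / ((‖w‖ ^ 2 : ℝ) : ℂ))

lemma Gfun_zero_of (hψ : CutoffFn ψ) {w : E3} (hw : ‖w‖ < 5/8) : Gfun ψ w = 0 := by
  rw [Gfun, psi1_zero_small hψ (by rw [abs_of_nonneg (norm_nonneg _)]; exact hw.le)]
  simp

lemma Gfun_smooth (hψ : CutoffFn ψ) : ContDiff ℝ (⊤ : ℕ∞) (Gfun ψ) := by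
  rw [contDiff_iff_contDiffAt]
  intro w
  by_cases hw : ‖w‖ < 5/8
  · have hev : Gfun ψ =ᶠ[nhds w] (fun _ => 0) := by
      have hball : Metric.ball w (5/8 - ‖w‖) ∈ nhds w :=
        Metric.ball_mem_nhds _ (by linarith)
      filter_upwards [hball] with v hv
      refine Gfun_zero_of hψ ?_
      have := norm_sub_norm_le v w
      rw [Metric.mem_ball] at hv
      rw [dist_eq_norm] at hv
      linarith [(norm_sub_norm_le v w).trans hv.le]
    exact (contDiffAt_const (c := (0:ℂ))).congr_of_eventuallyEq hev
  · push_neg at hw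
    have hw0 : w ≠ 0 := by
      intro h0
      rw [h0, norm_zero] at hw; norm_num at hw
    have h1 : ContDiffAt ℝ (⊤ : ℕ∞) (fun v : E3 => ((psi1 ψ ‖v‖ : ℝ) : ℂ)) w :=
      Complex.ofRealCLM.contDiff.contDiffAt.comp w (contDiff_psi1_norm hψ).contDiffAt
    have h2 : ContDiffAt ℝ (⊤ : ℕ∞) (fun v : E3 => Complex.I * ((v 2 : ℝ) : ℂ)) w := by
      refine contDiffAt_const.mul ?_
      exact (Complex.ofRealCLM.contDiff.comp
        (EuclideanSpace.proj (2 : Fin 3) : E3 →L[ℝ] ℝ).contDiff).contDiffAt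
    have h4 : (‖w‖ ^ 2 : ℝ) ≠ 0 := by positivity
    have h3' : ContDiffAt ℝ (⊤ : ℕ∞) (fun v : E3 => (((‖v‖ ^ 2)⁻¹ : ℝ) : ℂ)) w :=
      Complex.ofRealCLM.contDiff.contDiffAt.comp w
        (((contDiff_norm_sq ℝ).contDiffAt).inv h4)
    refine (h1.mul (h2.mul h3')).congr_of_eventuallyEq ?_
    filter_upwards with v
    rw [Gfun, div_eq_mul_inv, Complex.ofReal_inv]

lemma Gfun_supp (hψ : CutoffFn ψ) {w : E3} (hw : 3/2 < ‖w‖) : Gfun ψ w = 0 := by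
  rw [Gfun, psi1_zero_large hψ (by rw [abs_of_nonneg (norm_nonneg _)]; exact hw)]
  simp

lemma Gfun_compact_supp (hψ : CutoffFn ψ) : HasCompactSupport (Gfun ψ) := by
  refine HasCompactSupport.intro (K := Metric.closedBall (0:E3) (3/2))
    (isCompact_closedBall _ _) (fun w hw => ?_)
  rw [Metric.mem_closedBall, dist_zero_right, not_le] at hw
  exact Gfun_supp hψ hw



lemma hproj_apply (u : E3) (i : Fin 2) : hproj u i = ![u 0, u 1] i := rfl

def plin : E3 →ₗ[ℝ] E2 where
  toFun := hproj
  map_add' x y := by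
    ext i
    fin_cases i <;> simp [hproj_apply]
  map_smul' r x := by
    ext i
    fin_cases i <;> simp [hproj_apply]

def pclm : E3 →L[ℝ] E2 := plin.toContinuousLinearMap

@[simp] lemma pclm_apply (u : E3) : pclm u = hproj u := rfl

lemma norm_eq_sqE {n : ℕ} (x : EuclideanSpace ℝ (Fin n)) :
    ‖x‖ = Real.sqrt (∑ i, (x i) ^ 2) := by
  rw [EuclideanSpace.norm_eq]
  congr 1
  refine Finset.sum_congr rfl fun i _ => ?_
  rw [Real.norm_eq_abs, sq_abs]

lemma norm_hproj (u : E3) : ‖hproj u‖ = hnorm u := by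
  rw [norm_eq_sqE, hnorm]
  congr 1
  rw [Fin.sum_univ_two, hproj_apply, hproj_apply]
  simp

lemma norm3 (u : E3) : ‖u‖ = Real.sqrt (u 0 ^ 2 + u 1 ^ 2 + u 2 ^ 2) := by
  rw [norm_eq_sqE, Fin.sum_univ_three]

lemma hnorm_le_norm (u : E3) : hnorm u ≤ ‖u‖ := by
  rw [norm3, hnorm]
  exact Real.sqrt_le_sqrt (by nlinarith [sq_nonneg (u 2)])

lemma abs_coord2_le (u : E3) : |u 2| ≤ ‖u‖ := by
  rw [norm3, ← Real.sqrt_sq_eq_abs]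
  exact Real.sqrt_le_sqrt (by nlinarith [sq_nonneg (u 0), sq_nonneg (u 1)])

lemma pclm_norm_le : ‖(pclm : E3 →L[ℝ] E2)‖ ≤ 1 := by
  refine ContinuousLinearMap.opNorm_le_bound _ zero_le_one (fun u => ?_)
  rw [one_mul, pclm_apply, norm_hproj]
  exact hnorm_le_norm u

def Phif (ψ : ℝ → ℝ) (j : ℕ) (u : E2) : ℝ := if j = 0 then ψ ‖u‖ else psi1 ψ ‖u‖

def PhifC (ψ : ℝ → ℝ) (j : ℕ) : E2 → ℂ := fun u => ((Phif ψ j u : ℝ) : ℂ)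

def F0 (ψ : ℝ → ℝ) : E2 → ℂ := fun u => ((ψ ‖u‖ : ℝ) : ℂ)
def F1 (ψ : ℝ → ℝ) : E2 → ℂ := fun u => ((psi1 ψ ‖u‖ : ℝ) : ℂ)

lemma PhifC_eq (ψ : ℝ → ℝ) (j : ℕ) : PhifC ψ j = if j = 0 then F0 ψ else F1 ψ := by
  funext u
  by_cases hj : j = 0 <;> simp [PhifC, Phif, hj, F0, F1]

lemma F0_smooth (hψ : CutoffFn ψ) : ContDiff ℝ (⊤ : ℕ∞) (F0 ψ) :=
  Complex.ofRealCLM.contDiff.comp (contDiff_psi_norm hψ)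

lemma F1_smooth (hψ : CutoffFn ψ) : ContDiff ℝ (⊤ : ℕ∞) (F1 ψ) :=
  Complex.ofRealCLM.contDiff.comp (contDiff_psi1_norm hψ)

lemma F0_zero (hψ : CutoffFn ψ) {u : E2} (hu : 3/2 < ‖u‖) : F0 ψ u = 0 := by
  rw [F0, psi_zero_of_gt hψ (by rw [abs_of_nonneg (norm_nonneg _)]; exact hu)]
  simp

lemma F1_zero (hψ : CutoffFn ψ) {u : E2} (hu : 3/2 < ‖u‖) : F1 ψ u = 0 := by
  rw [F1, psi1_zero_large hψ (by rw [abs_of_nonneg (norm_nonneg _)]; exact hu)]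
  simp

lemma F0_supp (hψ : CutoffFn ψ) : HasCompactSupport (F0 ψ) := by
  refine HasCompactSupport.intro (K := Metric.closedBall (0:E2) (3/2))
    (isCompact_closedBall _ _) (fun u hu => ?_)
  rw [Metric.mem_closedBall, dist_zero_right, not_le] at hu
  exact F0_zero hψ hu

lemma F1_supp (hψ : CutoffFn ψ) : HasCompactSupport (F1 ψ) := by
  refine HasCompactSupport.intro (K := Metric.closedBall (0:E2) (3/2))
    (isCompact_closedBall _ _) (fun u hu => ?_)
  rw [Metric.mem_closedBall, dist_zero_right, not_le] at hu
  exact F1_zero hψ hu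

lemma PhifC_smooth (hψ : CutoffFn ψ) (j : ℕ) : ContDiff ℝ (⊤ : ℕ∞) (PhifC ψ j) := by
  rw [PhifC_eq]
  by_cases hj : j = 0 <;> simp only [hj, if_true, if_false, reduceIte]
  · exact F0_smooth hψ
  · exact F1_smooth hψ

lemma PhifC_zero (hψ : CutoffFn ψ) (j : ℕ) {u : E2} (hu : 3/2 < ‖u‖) : PhifC ψ j u = 0 := by
  rw [PhifC_eq]
  by_cases hj : j = 0 <;> simp only [hj, if_true, if_false, reduceIte]
  · exact F0_zero hψ hu
  · exact F1_zero hψ hu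

/-- The rescaled amplitude family. -/
def hfam (ψ : ℝ → ℝ) (j : ℕ) (lam : ℝ) : E3 → ℂ :=
  fun η => PhifC ψ j (pclm η) * Gfun ψ (dclm ![lam, lam, 1] η)

lemma hfam_smooth (hψ : CutoffFn ψ) (j : ℕ) (lam : ℝ) : ContDiff ℝ (⊤ : ℕ∞) (hfam ψ j lam) :=
  ((PhifC_smooth hψ j).comp pclm.contDiff).mul
    ((Gfun_smooth hψ).comp (dclm ![lam, lam, 1]).contDiff)

lemma hfam_zero (hψ : CutoffFn ψ) (j : ℕ) (lam : ℝ) {η : E3} (hη : 3 < ‖η‖) :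
    hfam ψ j lam η = 0 := by
  by_cases h1 : PhifC ψ j (pclm η) = 0
  · rw [hfam, h1, zero_mul]
  by_cases h2 : Gfun ψ (dclm ![lam, lam, 1] η) = 0
  · rw [hfam, h2, mul_zero]
  exfalso
  have hu : ‖pclm η‖ ≤ 3/2 := by
    by_contra h
    exact h1 (PhifC_zero hψ j (not_le.1 h))
  have hL : ‖dclm ![lam, lam, 1] η‖ ≤ 3/2 := by
    by_contra h
    exact h2 (Gfun_supp hψ (not_le.1 h))
  have h3 : |η 2| ≤ 3/2 := by
    have : (dclm ![lam, lam, 1] η) 2 = η 2 := by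
      rw [dclm_apply]; simp
    calc |η 2| = |(dclm ![lam, lam, 1] η) 2| := by rw [this]
      _ ≤ ‖dclm ![lam, lam, 1] η‖ := abs_coord2_le _
      _ ≤ 3/2 := hL
  have h4 : η 0 ^ 2 + η 1 ^ 2 ≤ (3/2)^2 := by
    have := hu
    rw [pclm_apply, norm_hproj, hnorm] at this
    have h5 : Real.sqrt (η 0 ^ 2 + η 1 ^ 2) ^ 2 ≤ (3/2)^2 :=
      pow_le_pow_left₀ (Real.sqrt_nonneg _) this 2
    rwa [Real.sq_sqrt (by positivity)] at h5
  have h6 : ‖η‖ ≤ 3 := by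
    rw [norm3]
    calc Real.sqrt (η 0 ^ 2 + η 1 ^ 2 + η 2 ^ 2) ≤ Real.sqrt 9 := by
          refine Real.sqrt_le_sqrt ?_
          have : η 2 ^ 2 ≤ (3/2)^2 := by rw [← sq_abs]; exact pow_le_pow_left₀ (abs_nonneg _) h3 2
          nlinarith
      _ = 3 := by rw [show (9:ℝ) = 3^2 by norm_num, Real.sqrt_sq (by norm_num)]
  linarith

lemma hfam_deriv_bound (hψ : CutoffFn ψ) : ∃ D : ℕ → ℝ, (∀ n, 0 ≤ D n) ∧
    ∀ (j : ℕ) (lam : ℝ), 0 < lam → lam ≤ 4 → ∀ (n : ℕ) (x : E3),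
      ‖iteratedFDeriv ℝ n (hfam ψ j lam) x‖ ≤ D n := by
  choose CP0 hCP0a hCP0b using fun n => iter_bound (F0_smooth hψ) (F0_supp hψ) n
  choose CP1 hCP1a hCP1b using fun n => iter_bound (F1_smooth hψ) (F1_supp hψ) n
  choose CG hCGa hCGb using fun n => iter_bound (Gfun_smooth hψ) (Gfun_compact_supp hψ) n
  set MP : ℕ → ℝ := fun i => max (CP0 i) (CP1 i) with hMP
  have hMPa : ∀ i, 0 ≤ MP i := fun i => (hCP0a i).trans (le_max_left _ _)
  refine ⟨fun n => ∑ i ∈ Finset.range (n+1),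
      (n.choose i : ℝ) * MP i * (CG (n-i) * 4 ^ (n-i)), fun n => ?_, ?_⟩
  · refine Finset.sum_nonneg fun i _ => ?_
    have := hMPa i; have := hCGa (n-i)
    positivity
  intro j lam hl hl4 n x
  set L : E3 →L[ℝ] E3 := dclm ![lam, lam, 1] with hLdef
  have hLnorm : ‖L‖ ≤ 4 := by
    refine dclm_norm_le _ (by norm_num) (fun i => ?_)
    have h1 : (![lam, lam, 1] : Fin 3 → ℝ) i = lam ∨ (![lam, lam, 1] : Fin 3 → ℝ) i = 1 := by
      fin_cases i <;> simp
    rcases h1 with h | h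
    · rw [h, abs_of_pos hl]; exact hl4
    · rw [h]; norm_num
  have hFbound : ∀ (i : ℕ) (u : E2), ‖iteratedFDeriv ℝ i (PhifC ψ j) u‖ ≤ MP i := by
    intro i u
    rw [PhifC_eq]
    by_cases hj : j = 0 <;> simp only [hj, reduceIte]
    · exact (hCP0b i u).trans (le_max_left _ _)
    · exact (hCP1b i u).trans (le_max_right _ _)
  have hA : ContDiff ℝ (⊤ : ℕ∞) ((PhifC ψ j) ∘ pclm) := (PhifC_smooth hψ j).comp pclm.contDiff
  have hB : ContDiff ℝ (⊤ : ℕ∞) ((Gfun ψ) ∘ L) := (Gfun_smooth hψ).comp L.contDiff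
  have heq : hfam ψ j lam = fun x => ((PhifC ψ j) ∘ pclm) x * ((Gfun ψ) ∘ L) x := rfl
  rw [heq]
  refine (norm_iteratedFDeriv_mul_le hA hB x (by exact_mod_cast le_top)).trans ?_
  refine Finset.sum_le_sum fun i hi => ?_
  have hAi : ‖iteratedFDeriv ℝ i ((PhifC ψ j) ∘ pclm) x‖ ≤ MP i := by
    refine (iter_comp_clm_bound (PhifC_smooth hψ j) pclm pclm_norm_le i x).trans ?_
    rw [one_pow, mul_one]
    exact hFbound i _
  have hBi : ‖iteratedFDeriv ℝ (n-i) ((Gfun ψ) ∘ L) x‖ ≤ CG (n-i) * 4 ^ (n-i) := by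
    refine (iter_comp_clm_bound (Gfun_smooth hψ) L hLnorm (n-i) x).trans ?_
    exact mul_le_mul_of_nonneg_right (hCGb _ _) (by positivity)
  have h1 : (n.choose i : ℝ) * ‖iteratedFDeriv ℝ i ((PhifC ψ j) ∘ pclm) x‖ ≤
      (n.choose i : ℝ) * MP i := mul_le_mul_of_nonneg_left hAi (by positivity)
  exact mul_le_mul h1 hBi (norm_nonneg _) (mul_nonneg (Nat.cast_nonneg _) (hMPa i))
open scoped RealInnerProductSpace in
lemma dclm_inner (c : Fin 3 → ℝ) (y η : E3) : ⟪y, dclm c η⟫ = ⟪dclm c y, η⟫ := by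
  rw [PiLp.inner_apply, PiLp.inner_apply]
  refine Finset.sum_congr rfl fun i _ => ?_
  simp only [RCLike.inner_apply, starRingEnd_apply, star_trivial, dclm_apply]
  ring

lemma hproj_dclm (a b : ℝ) (η : E3) :
    hproj (dclm ![a, a, b] η) = a • hproj η := by
  ext i
  fin_cases i <;>
    simp [hproj_apply, dclm_apply]

open scoped RealInnerProductSpace in
lemma dclm_smul_eq (a b : ℝ) (hb : b ≠ 0) (η : E3) :
    dclm ![a, a, b] η = b • dclm ![a / b, a / b, 1] η := by
  ext i
  fin_cases i <;> simp [dclm_apply] <;> field_simp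

lemma norm_dclm_eq (a b : ℝ) (hb : 0 < b) (η : E3) :
    ‖dclm ![a, a, b] η‖ = b * ‖dclm ![a / b, a / b, 1] η‖ := by
  rw [dclm_smul_eq a b hb.ne' η, norm_smul, Real.norm_eq_abs, abs_of_pos hb]

lemma phiDyadic_dclm (hψ : CutoffFn ψ) (kt k : ℕ) (η : E3) :
    phiDyadic ψ kt (hproj (dclm ![(2:ℝ)^kt, (2:ℝ)^kt, (2:ℝ)^k] η)) =
      Phif ψ kt (pclm η) := by
  have hn : ‖hproj (dclm ![(2:ℝ)^kt, (2:ℝ)^kt, (2:ℝ)^k] η)‖ = 2^kt * ‖hproj η‖ := by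
    rw [hproj_dclm, norm_smul, Real.norm_eq_abs, abs_of_pos (by positivity)]
  by_cases hkt : kt = 0
  · subst hkt
    rw [phiDyadic, if_pos rfl, Phif, if_pos rfl, hn, pclm_apply]
    norm_num
  · rw [phiDyadic, if_neg hkt, Phif, if_neg hkt, psiDyadic, hn, pclm_apply]
    have h2 : (2:ℝ) ^ (kt:ℤ) = 2 ^ kt := zpow_natCast 2 kt
    have e1 : (2:ℝ)^kt * ‖hproj η‖ / 2 ^ (kt:ℤ) = ‖hproj η‖ := by
      rw [h2]; field_simp
    have e2 : (2:ℝ)^kt * ‖hproj η‖ / 2 ^ ((kt:ℤ) - 1) = 2 * ‖hproj η‖ := by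
      rw [zpow_sub₀ (two_ne_zero), zpow_one, h2]
      field_simp
    rw [e1, e2, psi1]

lemma psiDyadic_dclm (hψ : CutoffFn ψ) (kt k : ℕ) (η : E3) :
    psiDyadic ψ (k:ℤ) (dclm ![(2:ℝ)^kt, (2:ℝ)^kt, (2:ℝ)^k] η) =
      psi1 ψ ‖dclm ![(2:ℝ)^kt / 2^k, (2:ℝ)^kt / 2^k, 1] η‖ := by
  rw [psiDyadic, norm_dclm_eq _ _ (by positivity)]
  set t := ‖dclm ![(2:ℝ)^kt / 2^k, (2:ℝ)^kt / 2^k, 1] η‖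
  have h2 : (2:ℝ) ^ (k:ℤ) = 2 ^ k := zpow_natCast 2 k
  have e1 : (2:ℝ)^k * t / 2 ^ (k:ℤ) = t := by rw [h2]; field_simp
  have e2 : (2:ℝ)^k * t / 2 ^ ((k:ℤ) - 1) = 2 * t := by
    rw [zpow_sub₀ (two_ne_zero), zpow_one, h2]
    field_simp
  rw [e1, e2, psi1]

lemma coord2_dclm (a b : ℝ) (η : E3) : (dclm ![a, a, b] η) 2 = b * η 2 := by
  rw [dclm_apply]; simp

lemma abs_coord2_le_dclm (a : ℝ) (η : E3) : |η 2| ≤ ‖dclm ![a, a, 1] η‖ := by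
  have h : η 2 = (dclm ![a, a, 1] η) 2 := by rw [coord2_dclm, one_mul]
  rw [h]
  exact abs_coord2_le _

lemma factor_dclm (a b : ℝ) (hb : 0 < b) (η : E3) :
    Complex.I * (((dclm ![a, a, b] η) 2 : ℝ) : ℂ) /
        ((‖dclm ![a, a, b] η‖ ^ 2 : ℝ) : ℂ) =
      ((b⁻¹ : ℝ) : ℂ) * (Complex.I * (((dclm ![a/b, a/b, 1] η) 2 : ℝ) : ℂ) /
        ((‖dclm ![a/b, a/b, 1] η‖ ^ 2 : ℝ) : ℂ)) := by
  set L := dclm ![a/b, a/b, 1] with hL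
  have h2 : (L η) 2 = η 2 := by rw [hL, coord2_dclm, one_mul]
  have hT2 : (dclm ![a, a, b] η) 2 = b * η 2 := coord2_dclm a b η
  have hnorm : ‖dclm ![a, a, b] η‖ = b * ‖L η‖ := norm_dclm_eq a b hb η
  by_cases h0 : ‖L η‖ = 0
  · have hz : η 2 = 0 := by
      have := abs_coord2_le_dclm (a/b) η
      rw [← hL, h0] at this
      exact abs_eq_zero.1 (le_antisymm this (abs_nonneg _))
    rw [hT2, h2, hz, hnorm, h0]
    simp
  · rw [hT2, h2, hnorm]
    have hbC : ((b : ℝ) : ℂ) ≠ 0 := Complex.ofReal_ne_zero.2 hb.ne'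
    have hLC : ((‖L η‖ : ℝ) : ℂ) ≠ 0 := Complex.ofReal_ne_zero.2 h0
    push_cast
    field_simp

open scoped RealInnerProductSpace in
lemma scaling_pointwise (hψ : CutoffFn ψ) (k kt : ℕ) (y η : E3) :
    Complex.exp (Complex.I * ((⟪y, dclm ![(2:ℝ)^kt, (2:ℝ)^kt, (2:ℝ)^k] η⟫ : ℝ) : ℂ)) *
      Complex.ofReal (phiDyadic ψ kt (hproj (dclm ![(2:ℝ)^kt, (2:ℝ)^kt, (2:ℝ)^k] η)) *
        psiDyadic ψ (k:ℤ) (dclm ![(2:ℝ)^kt, (2:ℝ)^kt, (2:ℝ)^k] η)) *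
      (Complex.I * (((dclm ![(2:ℝ)^kt, (2:ℝ)^kt, (2:ℝ)^k] η) 2 : ℝ) : ℂ) /
        ((‖dclm ![(2:ℝ)^kt, (2:ℝ)^kt, (2:ℝ)^k] η‖ ^ 2 : ℝ) : ℂ)) =
    ((((2:ℝ)^k)⁻¹ : ℝ) : ℂ) *
      (Complex.exp (Complex.I * ((⟪dclm ![(2:ℝ)^kt, (2:ℝ)^kt, (2:ℝ)^k] y, η⟫ : ℝ) : ℂ)) *
        hfam ψ kt ((2:ℝ)^kt / (2:ℝ)^k) η) := by
  have hb : (0:ℝ) < 2^k := by positivity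
  rw [dclm_inner, phiDyadic_dclm hψ kt k η, psiDyadic_dclm hψ kt k η,
    factor_dclm _ _ hb η, hfam, Gfun, PhifC]
  push_cast
  ring

open scoped RealInnerProductSpace in
lemma integral_exp_eq (g : E3 → ℂ) (z : E3) :
    ∫ η : E3, Complex.exp (Complex.I * ((⟪z, η⟫ : ℝ) : ℂ)) * g η
      = 𝓕 g (-(2 * Real.pi)⁻¹ • z) := by
  rw [Real.fourier_eq']
  refine integral_congr_ae (Filter.Eventually.of_forall fun η => ?_)
  simp only [smul_eq_mul]
  congr 1
  have h1 : ⟪η, -(2 * Real.pi)⁻¹ • z⟫ = -(2 * Real.pi)⁻¹ * ⟪η, z⟫ :=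
    real_inner_smul_right _ _ _
  have h2 : -2 * Real.pi * ⟪η, -(2 * Real.pi)⁻¹ • z⟫ = ⟪z, η⟫ := by
    rw [h1, real_inner_comm]
    have hpi : Real.pi ≠ 0 := Real.pi_ne_zero
    field_simp
  rw [h2, mul_comm]

/-- The kernel `K_{k,k̃}(y) = ∫ e^{iy·ξ} φ_{k̃}(ξ') ψ_k(ξ) (iξ₃/|ξ|²) dξ`. -/
def Kkkt (ψ : ℝ → ℝ) (k : ℤ) (kt : ℕ) (y : E3) : ℂ :=
  ∫ ξ : E3, Complex.exp (Complex.I * (⟪y, ξ⟫ : ℝ)) *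
    Complex.ofReal (phiDyadic ψ kt (hproj ξ) * psiDyadic ψ k ξ) *
    (Complex.I * ((ξ 2 : ℝ) : ℂ) / ((‖ξ‖ ^ 2 : ℝ) : ℂ))

/-- The kernel bound
`|K_{k,k̃}(y)| ≤ C_N 2^{2k̃} (1+2^{k̃}|y'|)^{−N} (1+2^k|y₃|)^{−N}`, uniformly in `k, k̃`. -/
theorem stmt19 (ψ : ℝ → ℝ) (hψ : CutoffFn ψ) (N : ℕ) :
    ∃ C : ℝ, ∀ (k kt : ℕ), (kt : ℤ) ≤ (k : ℤ) + 2 → ∀ y : E3,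
      ‖Kkkt ψ (k : ℤ) kt y‖ ≤
        C * (2:ℝ) ^ (2 * kt) * ((1 + (2:ℝ) ^ kt * hnorm y) ^ N)⁻¹ *
          ((1 + (2:ℝ) ^ k * |y 2|) ^ N)⁻¹ := by

  obtain ⟨Cd, hCd0, s, hdecay⟩ := fourier_decay (2 * N)
  obtain ⟨D, hD0, hDb⟩ := hfam_deriv_bound hψ
  set SB : ℝ := ∑ i ∈ s, 3 ^ i.1 * D i.2 with hSB
  have hSB0 : 0 ≤ SB := Finset.sum_nonneg fun i _ => by have := hD0 i.2; positivity
  refine ⟨Cd * SB * (2 * Real.pi) ^ (2 * N), fun k kt hkt y => ?_⟩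
  have ha0 : (0:ℝ) < 2 ^ kt := by positivity
  have hb0 : (0:ℝ) < 2 ^ k := by positivity
  have hl : 0 < (2:ℝ)^kt / 2^k := by positivity
  have hl4 : (2:ℝ)^kt / 2^k ≤ 4 := by
    rw [div_le_iff₀ hb0]
    have hkt' : kt ≤ k + 2 := by exact_mod_cast hkt
    calc (2:ℝ)^kt ≤ 2^(k+2) := pow_le_pow_right₀ one_le_two hkt'
      _ = 4 * 2^k := by rw [pow_add]; ring
  -- Schwartz packaging
  have hsm := hfam_smooth hψ kt ((2:ℝ)^kt / 2^k)
  have hkey : ∀ (k' n : ℕ) (x : E3),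
      ‖x‖ ^ k' * ‖iteratedFDeriv ℝ n (hfam ψ kt ((2:ℝ)^kt / 2^k)) x‖ ≤ 3 ^ k' * D n := by
    intro k' n x
    by_cases hx : ‖x‖ ≤ 3
    · exact mul_le_mul (pow_le_pow_left₀ (norm_nonneg _) hx k')
        (hDb kt _ hl hl4 n x) (norm_nonneg _) (by positivity)
    · have hzero : iteratedFDeriv ℝ n (hfam ψ kt ((2:ℝ)^kt / 2^k)) x = 0 := by
        by_contra h
        have hmem : x ∈ tsupport (hfam ψ kt ((2:ℝ)^kt / 2^k)) :=
          support_iteratedFDeriv_subset n (Function.mem_support.2 h)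
        have hts : tsupport (hfam ψ kt ((2:ℝ)^kt / 2^k)) ⊆ Metric.closedBall 0 3 := by
          refine closure_minimal ?_ Metric.isClosed_closedBall
          intro u hu
          rw [Metric.mem_closedBall, dist_zero_right]
          by_contra h3
          exact hu (hfam_zero hψ kt _ (not_le.1 h3))
        have := hts hmem
        rw [Metric.mem_closedBall, dist_zero_right] at this
        exact hx this
      rw [hzero, norm_zero, mul_zero]
      have := hD0 n; positivity
  set H : SchwartzMap E3 ℂ :=
    ⟨hfam ψ kt ((2:ℝ)^kt / 2^k), hsm.of_le (by simp), fun k' n => ⟨3 ^ k' * D n, hkey k' n⟩⟩ with hH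
  have hHcoe : ⇑H = hfam ψ kt ((2:ℝ)^kt / 2^k) := rfl
  have hsup : (s.sup (schwartzSeminormFamily ℝ E3 ℂ)) H ≤ SB := by
    refine Seminorm.finset_sup_apply_le hSB0 fun i hi => ?_
    have h1 : schwartzSeminormFamily ℝ E3 ℂ i H ≤ 3 ^ i.1 * D i.2 := by
      have he : schwartzSeminormFamily ℝ E3 ℂ i = SchwartzMap.seminorm ℝ i.1 i.2 := rfl
      rw [he]
      refine SchwartzMap.seminorm_le_bound ℝ i.1 i.2 H (by have := hD0 i.2; positivity) ?_
      exact hkey i.1 i.2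
    exact h1.trans (Finset.single_le_sum (f := fun i => (3:ℝ) ^ i.1 * D i.2)
      (fun j _ => by have := hD0 j.2; positivity) hi)
  -- change of variables
  have hcpos : ∀ i, 0 < (![(2:ℝ)^kt, (2:ℝ)^kt, (2:ℝ)^k]) i := by
    intro i; fin_cases i <;> simp <;> positivity
  set z : E3 := dclm ![(2:ℝ)^kt, (2:ℝ)^kt, (2:ℝ)^k] y with hz
  set w : E3 := -(2 * Real.pi)⁻¹ • z with hw
  have hK : Kkkt ψ (k:ℤ) kt y =
      ((((2:ℝ)^kt * (2:ℝ)^kt * (2:ℝ)^k) : ℝ) : ℂ) * (((((2:ℝ)^k)⁻¹ : ℝ) : ℂ) * 𝓕 (⇑H) w) := by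
    calc Kkkt ψ (k:ℤ) kt y
        = ((![(2:ℝ)^kt, (2:ℝ)^kt, (2:ℝ)^k] 0 : ℝ) : ℂ) * ((![(2:ℝ)^kt, (2:ℝ)^kt, (2:ℝ)^k] 1 : ℝ) : ℂ)
            * ((![(2:ℝ)^kt, (2:ℝ)^kt, (2:ℝ)^k] 2 : ℝ) : ℂ) *
          ∫ η : E3, Complex.exp (Complex.I *
              ((⟪y, dclm ![(2:ℝ)^kt, (2:ℝ)^kt, (2:ℝ)^k] η⟫ : ℝ) : ℂ)) *
            Complex.ofReal (phiDyadic ψ kt (hproj (dclm ![(2:ℝ)^kt, (2:ℝ)^kt, (2:ℝ)^k] η)) *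
              psiDyadic ψ (k:ℤ) (dclm ![(2:ℝ)^kt, (2:ℝ)^kt, (2:ℝ)^k] η)) *
            (Complex.I * (((dclm ![(2:ℝ)^kt, (2:ℝ)^kt, (2:ℝ)^k] η) 2 : ℝ) : ℂ) /
              ((‖dclm ![(2:ℝ)^kt, (2:ℝ)^kt, (2:ℝ)^k] η‖ ^ 2 : ℝ) : ℂ)) := by
          exact integral_dclm _ hcpos _
      _ = ((((2:ℝ)^kt * (2:ℝ)^kt * (2:ℝ)^k) : ℝ) : ℂ) *
          ∫ η : E3, ((((2:ℝ)^k)⁻¹ : ℝ) : ℂ) *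
            (Complex.exp (Complex.I * ((⟪z, η⟫ : ℝ) : ℂ)) * (⇑H η)) := by
          congr 1
          · push_cast
            simp
          · refine integral_congr_ae (Filter.Eventually.of_forall fun η => ?_)
            rw [hHcoe, hz]
            exact scaling_pointwise hψ k kt y η
      _ = ((((2:ℝ)^kt * (2:ℝ)^kt * (2:ℝ)^k) : ℝ) : ℂ) * (((((2:ℝ)^k)⁻¹ : ℝ) : ℂ) *
            ∫ η : E3, Complex.exp (Complex.I * ((⟪z, η⟫ : ℝ) : ℂ)) * (⇑H η)) := by
          rw [MeasureTheory.integral_const_mul]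
      _ = ((((2:ℝ)^kt * (2:ℝ)^kt * (2:ℝ)^k) : ℝ) : ℂ) * (((((2:ℝ)^k)⁻¹ : ℝ) : ℂ) * 𝓕 (⇑H) w) := by
          rw [integral_exp_eq (⇑H) z, hw]
  have hnormK : ‖Kkkt ψ (k:ℤ) kt y‖ = (2:ℝ) ^ (2 * kt) * ‖𝓕 (⇑H) w‖ := by
    rw [hK, norm_mul, norm_mul, Complex.norm_real, Complex.norm_real, Real.norm_eq_abs, Real.norm_eq_abs,
      abs_of_pos (by positivity), abs_of_pos (by positivity)]
    rw [two_mul, pow_add]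
    field_simp
  -- decay estimate
  have hdec := hdecay H w
  have h1 : (1 + ‖z‖) ^ (2 * N) ≤ (2 * Real.pi) ^ (2 * N) * (1 + ‖w‖) ^ (2 * N) := by
    rw [← mul_pow]
    refine pow_le_pow_left₀ (by positivity) ?_ _
    have hwz : ‖w‖ = (2 * Real.pi)⁻¹ * ‖z‖ := by
      rw [hw, norm_smul, Real.norm_eq_abs, abs_neg, abs_of_pos (by positivity)]
    rw [hwz]
    have h2pi : (1:ℝ) ≤ 2 * Real.pi := by nlinarith [Real.pi_gt_three]
    have hpi0 : Real.pi ≠ 0 := Real.pi_ne_zero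
    have he : 2 * Real.pi * (1 + (2 * Real.pi)⁻¹ * ‖z‖) = 2 * Real.pi + ‖z‖ := by
      field_simp
    rw [he]
    linarith
  have hu : hnorm z = (2:ℝ)^kt * hnorm y := by
    have h0 : z 0 = (2:ℝ)^kt * y 0 := by rw [hz, dclm_apply]; simp
    have h1' : z 1 = (2:ℝ)^kt * y 1 := by rw [hz, dclm_apply]; simp
    rw [hnorm, hnorm, h0, h1']
    rw [show ((2:ℝ)^kt * y 0)^2 + ((2:ℝ)^kt * y 1)^2 = ((2:ℝ)^kt)^2 * (y 0^2 + y 1^2) by ring,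
      Real.sqrt_mul (sq_nonneg _), Real.sqrt_sq ha0.le]
  have hv : |z 2| = (2:ℝ)^k * |y 2| := by
    have h2 : z 2 = (2:ℝ)^k * y 2 := by rw [hz, dclm_apply]; simp
    rw [h2, abs_mul, abs_of_pos hb0]
  have hny : 0 ≤ hnorm y := Real.sqrt_nonneg _
  have hprod : (1 + (2:ℝ)^kt * hnorm y) ^ N * (1 + (2:ℝ)^k * |y 2|) ^ N ≤
      (1 + ‖z‖) ^ (2 * N) := by
    rw [← hu, ← hv, ← mul_pow, pow_mul]
    refine pow_le_pow_left₀ ?_ ?_ N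
    · have := Real.sqrt_nonneg (z 0 ^ 2 + z 1 ^ 2)
      have := abs_nonneg (z 2)
      rw [hnorm]
      positivity
    · have h3 := hnorm_le_norm z
      have h4 := abs_coord2_le z
      have h5 : 0 ≤ hnorm z := Real.sqrt_nonneg _
      have h6 := abs_nonneg (z 2)
      nlinarith [mul_le_mul h3 h4 h6 (norm_nonneg z)]
  have hPpos : (0:ℝ) < (1 + (2:ℝ)^kt * hnorm y) ^ N := by positivity
  have hQpos : (0:ℝ) < (1 + (2:ℝ)^k * |y 2|) ^ N := by positivity
  have hFw : ‖𝓕 (⇑H) w‖ ≤ (2 * Real.pi) ^ (2*N) * (Cd * SB) *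
      (((1 + (2:ℝ)^kt * hnorm y) ^ N)⁻¹ * ((1 + (2:ℝ)^k * |y 2|) ^ N)⁻¹) := by
    rw [← mul_inv, ← div_eq_mul_inv, le_div_iff₀ (by positivity)]
    calc ‖𝓕 (⇑H) w‖ * ((1 + (2:ℝ)^kt * hnorm y) ^ N * (1 + (2:ℝ)^k * |y 2|) ^ N)
        ≤ ‖𝓕 (⇑H) w‖ * (1 + ‖z‖) ^ (2*N) :=
          mul_le_mul_of_nonneg_left hprod (norm_nonneg _)
      _ ≤ ‖𝓕 (⇑H) w‖ * ((2 * Real.pi) ^ (2*N) * (1 + ‖w‖) ^ (2*N)) :=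
          mul_le_mul_of_nonneg_left h1 (norm_nonneg _)
      _ = (2 * Real.pi) ^ (2*N) * ((1 + ‖w‖) ^ (2*N) * ‖𝓕 (⇑H) w‖) := by ring
      _ ≤ (2 * Real.pi) ^ (2*N) * (Cd * SB) := by
          refine mul_le_mul_of_nonneg_left ?_ (by positivity)
          refine hdec.trans ?_
          exact mul_le_mul_of_nonneg_left hsup hCd0
  calc ‖Kkkt ψ (k:ℤ) kt y‖ = (2:ℝ) ^ (2*kt) * ‖𝓕 (⇑H) w‖ := hnormK
    _ ≤ (2:ℝ) ^ (2*kt) * ((2 * Real.pi) ^ (2*N) * (Cd * SB) *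
          (((1 + (2:ℝ)^kt * hnorm y) ^ N)⁻¹ * ((1 + (2:ℝ)^k * |y 2|) ^ N)⁻¹)) :=
        mul_le_mul_of_nonneg_left hFw (by positivity)
    _ = Cd * SB * (2 * Real.pi) ^ (2*N) * (2:ℝ) ^ (2*kt) *
          ((1 + (2:ℝ)^kt * hnorm y) ^ N)⁻¹ * ((1 + (2:ℝ)^k * |y 2|) ^ N)⁻¹ := by ring
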